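/- For all integers n ≥ 3 and m ≥ 2, R(P_n, 2K_m) = (n−1)(m−1) + 2, where P_n is the path on n vertices. -/

import Mathlib

open SimpleGraph Finset

/-- `G` embeds into `H` (a copy of `G` appears in `H`). -/
def graphEmbeds {V W : Type*} (G : SimpleGraph V) (H : SimpleGraph W) : Prop :=
  ∃ f : V → W, Function.Injective f ∧ ∀ u v, G.Adj u v → H.Adj (f u) (f v)

/-- `N` is large enough for the Ramsey property: every red/blue coloring of `K_N`
(the red graph `R`, blue graph `Rᶜ`) contains a red `G` or a blue `H`. -/
def isRamsey {V W : Type*} (G : SimpleGraph V) (H : SimpleGraph W) (N : ℕ) : Prop :=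
  ∀ R : SimpleGraph (Fin N), graphEmbeds G R ∨ graphEmbeds H Rᶜ

/-- The Ramsey number `R(G,H)`. -/
noncomputable def ramsey {V W : Type*} (G : SimpleGraph V) (H : SimpleGraph W) : ℕ :=
  sInf {N | isRamsey G H N}

/-- `t` disjoint copies of the complete graph `K_m`. -/
def kCliques (t m : ℕ) : SimpleGraph (Fin t × Fin m) where
  Adj x y := x.1 = y.1 ∧ x.2 ≠ y.2
  symm := ⟨fun x y h => ⟨h.1.symm, h.2.symm⟩⟩
  loopless := ⟨fun x h => h.2 rfl⟩

/-- The chromatic number as a natural number. -/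
noncomputable def chromNum {V : Type*} (G : SimpleGraph V) : ℕ := sInf {n | G.Colorable n}

/-- The chromatic surplus: the minimum size of a color class over all proper
colorings with `chromNum G` colors. -/
noncomputable def surplus {V : Type*} [Fintype V] (G : SimpleGraph V) : ℕ :=
  sInf {k | ∃ C : G.Coloring (Fin (chromNum G)), ∃ i : Fin (chromNum G),
    (Finset.univ.filter (fun v => C v = i)).card = k}

/-- `a` is a leaf of `G`: it has a unique neighbor. -/
def IsLeaf {V : Type*} (G : SimpleGraph V) (a : V) : Prop := ∃! w, G.Adj a w

/-- Stretching: delete a leaf `b` and attach a new vertex (reusing the label `b`)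
to the leaf `a`. -/
def isStretch {V : Type*} (T T' : SimpleGraph V) : Prop :=
  ∃ a b : V, a ≠ b ∧ IsLeaf T a ∧ IsLeaf T b ∧
    ∀ x y, T'.Adj x y ↔
      ((T.Adj x y ∧ x ≠ b ∧ y ≠ b) ∨ (x = b ∧ y = a) ∨ (x = a ∧ y = b))

/-- Expanding at a vertex `u` of degree `d` (`2 ≤ d ≤ n-2`) all of whose neighbors
are leaves except `z0`: delete a leaf `b` outside `N[u]` and attach a new vertex
(reusing the label `b`) to `u`. -/
def isExpand {V : Type*} [Fintype V] (T T' : SimpleGraph V) : Prop :=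
  ∃ u b z0 : V, T.Adj u z0 ∧ ¬ IsLeaf T z0 ∧
    (∀ z, T.Adj u z → z ≠ z0 → IsLeaf T z) ∧
    2 ≤ (T.neighborSet u).ncard ∧ (T.neighborSet u).ncard ≤ Fintype.card V - 2 ∧
    IsLeaf T b ∧ b ≠ u ∧ ¬ T.Adj u b ∧
    ∀ x y, T'.Adj x y ↔
      ((T.Adj x y ∧ x ≠ b ∧ y ≠ b) ∨ (x = b ∧ y = u) ∨ (x = u ∧ y = b))

/-- Disjoint union of `K_m` and `K_l`. -/
def kUnion (m l : ℕ) : SimpleGraph (Fin m ⊕ Fin l) where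
  Adj x y := x ≠ y ∧ ((x.isLeft ∧ y.isLeft) ∨ (x.isRight ∧ y.isRight))
  symm := ⟨fun x y h => ⟨h.1.symm, h.2.imp (fun p => ⟨p.2, p.1⟩) (fun p => ⟨p.2, p.1⟩)⟩⟩
  loopless := ⟨fun x h => h.1 rfl⟩

/-- Disjoint union of `k` graphs, each on `Fin n`. -/
def disjUnion {k n : ℕ} (Fs : Fin k → SimpleGraph (Fin n)) :
    SimpleGraph (Fin k × Fin n) where
  Adj x y := x.1 = y.1 ∧ (Fs x.1).Adj x.2 y.2
  symm := by
    refine ⟨?_⟩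
    rintro ⟨i, a⟩ ⟨j, b⟩ ⟨h1, h2⟩
    dsimp at h1 h2 ⊢
    subst h1
    exact ⟨rfl, h2.symm⟩
  loopless := by
    refine ⟨?_⟩
    rintro ⟨i, a⟩ ⟨h1, h2⟩
    exact (Fs i).irrefl h2

/-- Disjoint union of graphs `Fs i` on `Fin (n i)`. -/
def sigmaUnion {r : ℕ} {n : Fin r → ℕ} (Fs : ∀ i, SimpleGraph (Fin (n i))) :
    SimpleGraph (Σ i, Fin (n i)) where
  Adj x y := ∃ (i : Fin r) (a b : Fin (n i)), x = ⟨i, a⟩ ∧ y = ⟨i, b⟩ ∧ (Fs i).Adj a b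
  symm := by
    refine ⟨?_⟩
    rintro x y ⟨i, a, b, hx, hy, h⟩
    exact ⟨i, b, a, hy, hx, h.symm⟩
  loopless := by
    refine ⟨?_⟩
    rintro x ⟨i, a, b, hx, hy, h⟩
    rw [hx] at hy
    obtain ⟨-, hab⟩ := (Sigma.mk.inj_iff).mp hy
    exact (Fs i).irrefl (by cases eq_of_heq hab; exact h)


/-!
If the red graph has no path on `n` vertices, repeatedly delete from the remaining vertex set
`s` the vertex set of a longest path inside `s`: it has at most `n - 1` vertices, and its two
ends have no red neighbours left in `s`. Putting one end into `A` and the other into `B` (a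
one-vertex path goes to the smaller of the two) builds disjoint red-independent sets with
`#B ≤ #A ≤ #B + 1` and `#s ≤ (n - 2) * #B + #A`; on `(n - 1) * (m - 1) + 2` vertices this
forces `m ≤ #B`, so the blue graph contains two disjoint copies of `K_m`.

Conversely, colour red the disjoint union of `m - 1` cliques `K_{n-1}` and one extra vertex:
there is no red `P_n`, and every blue `K_m` meets all `m` red blocks, so two disjoint blue
copies of `K_m` would both contain the extra vertex.
-/
variable {V W ι : Type*}

theorem graphEmbeds_iff_isContained {G : SimpleGraph V} {H : SimpleGraph W} :
    graphEmbeds G H ↔ G ⊑ H :=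
  ⟨fun ⟨f, hf, hadj⟩ => ⟨⟨⟨f, hadj _ _⟩, hf⟩⟩,
    fun ⟨c⟩ => ⟨c, c.injective, fun _ _ => c.toHom.map_adj⟩⟩

namespace SimpleGraph

theorem pathGraph_isContained_pathGraph {k l : ℕ} (h : k ≤ l) : pathGraph k ⊑ pathGraph l :=
  ⟨⟨⟨Fin.castLE h, by simp [pathGraph_adj]⟩, Fin.castLE_injective h⟩⟩

theorem compl_comap_of_injective {f : V → W} (hf : Function.Injective f) (G : SimpleGraph W) :
    (G.comap f)ᶜ = Gᶜ.comap f := by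
  ext a b
  simp [hf.ne_iff]

theorem IsIndepSet.insert_of_forall_not_adj {G : SimpleGraph V} {s : Set V} {a : V}
    (hs : G.IsIndepSet s) (ha : ∀ b ∈ s, ¬ G.Adj a b) : G.IsIndepSet (insert a s) :=
  (isClique_compl G).1 <| ((isClique_compl G).2 hs).insert fun b hb hab => ⟨hab, ha b hb⟩

variable {G : SimpleGraph V} {n : ℕ}

theorem Walk.IsPath.length_add_one_lt (hG : ¬ pathGraph n ⊑ G) {u v : V} {p : G.Walk u v}
    (hp : p.IsPath) : p.length + 1 < n :=
  lt_of_not_ge fun h => hG ((pathGraph_isContained_pathGraph h).trans hp.isContained_pathGraph)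

theorem exists_isPath_ends_not_adj_outside (s : Finset V) (hs : s.Nonempty) :
    ∃ (u v : V) (p : G.Walk u v), p.IsPath ∧ (∀ x ∈ p.support, x ∈ s) ∧
      ∀ x ∈ s, x ∉ p.support → ¬ G.Adj u x ∧ ¬ G.Adj v x := by
  classical
  let IsPathIn : ℕ → Prop := fun k =>
    ∃ (u v : V) (p : G.Walk u v), p.IsPath ∧ (∀ x ∈ p.support, x ∈ s) ∧ p.length = k
  have hbound : ∀ {u v : V} (p : G.Walk u v), p.IsPath → (∀ x ∈ p.support, x ∈ s) →
      p.length ≤ #s := by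
    intro u v p hp hps
    have := card_le_card (s := p.support.toFinset) fun x hx => hps x (List.mem_toFinset.1 hx)
    rw [List.toFinset_card_of_nodup hp.support_nodup, Walk.length_support] at this
    omega
  obtain ⟨v₀, hv₀⟩ := hs
  have hnil : IsPathIn 0 := ⟨v₀, v₀, .nil, by simp, by simpa using hv₀, rfl⟩
  obtain ⟨u, v, p, hp, hps, hlen⟩ := Nat.findGreatest_spec (Nat.zero_le #s) hnil
  have hmax : ∀ {u' v' : V} (q : G.Walk u' v'), q.IsPath → (∀ x ∈ q.support, x ∈ s) →
      q.length ≤ p.length := fun q hq hqs =>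
    hlen ▸ Nat.le_findGreatest (hbound q hq hqs) ⟨_, _, q, hq, hqs, rfl⟩
  have hstart : ∀ {u' v' : V} (q : G.Walk u' v'), q.IsPath → (∀ x ∈ q.support, x ∈ s) →
      q.length = p.length → ∀ x ∈ s, x ∉ q.support → ¬ G.Adj u' x := by
    intro u' v' q hq hqs hqlen x hx hxq hadj
    have := hmax (.cons hadj.symm q) ((Walk.cons_isPath_iff _ _).2 ⟨hq, hxq⟩)
      (by simpa [hx] using hqs)
    simp only [Walk.length_cons] at this
    omega
  refine ⟨u, v, p, hp, hps, fun x hx hxp => ⟨hstart p hp hps rfl x hx hxp, ?_⟩⟩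
  -- `p.reverse` is a longest path starting at `v`
  exact hstart p.reverse ((Walk.isPath_reverse_iff p).2 hp) (by simpa using hps)
    (Walk.length_reverse p) x hx (by simpa using hxp)

theorem exists_subset_card_lt_ends_not_adj [DecidableEq V] (hG : ¬ pathGraph n ⊑ G)
    {s : Finset V} (hs : s.Nonempty) :
    ∃ P ⊆ s, #P < n ∧ ∃ u ∈ P, ∃ v ∈ P, (u ≠ v ∨ #P = 1) ∧
      ∀ x ∈ s \ P, ¬ G.Adj u x ∧ ¬ G.Adj v x := by
  obtain ⟨u, v, p, hp, hps, hends⟩ := exists_isPath_ends_not_adj_outside (G := G) s hs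
  have hcard : #p.support.toFinset = p.length + 1 := by
    rw [List.toFinset_card_of_nodup hp.support_nodup, Walk.length_support]
  refine ⟨p.support.toFinset, fun x hx => hps x (List.mem_toFinset.1 hx),
    hcard ▸ hp.length_add_one_lt hG, u, by simp, v, by simp, ?_, fun x hx => ?_⟩
  · rcases eq_or_ne u v with rfl | huv
    · right
      rw [hcard, (Walk.isPath_iff_nil.1 hp).length_eq_zero]
    · exact Or.inl huv
  · rw [mem_sdiff, List.mem_toFinset] at hx
    exact hends x hx.1 hx.2

theorem exists_isIndepSet_pair [DecidableEq V] (hn : 3 ≤ n) (hG : ¬ pathGraph n ⊑ G)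
    (s : Finset V) :
    ∃ A B : Finset V, A ⊆ s ∧ B ⊆ s ∧ Disjoint A B ∧ G.IsIndepSet A ∧ G.IsIndepSet B ∧
      #B ≤ #A ∧ #A ≤ #B + 1 ∧ #s ≤ (n - 2) * #B + #A := by
  induction s using Finset.strongInduction with | H s ih =>
  rcases s.eq_empty_or_nonempty with rfl | hs
  · exact ⟨∅, ∅, by simp⟩
  obtain ⟨P, hPs, hPn, u, hu, v, hv, huv, hends⟩ := exists_subset_card_lt_ends_not_adj hG hs
  obtain ⟨A, B, hA, hB, hAB, hAi, hBi, hBA, hAB1, hcard⟩ :=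
    ih (s \ P) (sdiff_ssubset hPs ⟨u, hu⟩)
  have hs_card : #s = #(s \ P) + #P := (card_sdiff_add_card_eq_card hPs).symm
  have hext : ∀ C ⊆ s \ P, G.IsIndepSet C → ∀ w ∈ P, (∀ x ∈ s \ P, ¬ G.Adj w x) →
      insert w C ⊆ s ∧ w ∉ C ∧ G.IsIndepSet (insert w C : Finset V) := by
    intro C hC hCi w hw hwx
    refine ⟨insert_subset (hPs hw) (hC.trans sdiff_subset), fun hwC => ?_, ?_⟩
    · exact (mem_sdiff.1 (hC hwC)).2 hw
    · rw [coe_insert]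
      exact hCi.insert_of_forall_not_adj fun x hx => hwx x (hC hx)
  obtain ⟨hAu, huA, hAui⟩ := hext A hA hAi u hu fun x hx => (hends x hx).1
  obtain ⟨hBu, huB, hBui⟩ := hext B hB hBi u hu fun x hx => (hends x hx).1
  obtain ⟨hBv, hvB, hBvi⟩ := hext B hB hBi v hv fun x hx => (hends x hx).2
  have hvA : v ∉ A := fun hvA => (mem_sdiff.1 (hA hvA)).2 hv
  have hA_s : A ⊆ s := hA.trans sdiff_subset
  have hB_s : B ⊆ s := hB.trans sdiff_subset
  rcases huv with huv | hP1
  · refine ⟨insert u A, insert v B, hAu, hBv, ?_, hAui, hBvi, ?_, ?_, ?_⟩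
    · simp [huv.symm, huB, hvA, hAB]
    all_goals rw [card_insert_of_notMem huA, card_insert_of_notMem hvB]
    · omega
    · omega
    · rw [hs_card, Nat.mul_succ]
      omega
  · rcases hBA.eq_or_lt with hBA | hBA
    · refine ⟨insert u A, B, hAu, hB_s, ?_, hAui, hBi, ?_, ?_, ?_⟩
      · simp [huB, hAB]
      all_goals rw [card_insert_of_notMem huA]
      all_goals omega
    · refine ⟨A, insert u B, hA_s, hBu, ?_, hAi, hBui, ?_, ?_, ?_⟩
      · simp [huA, hAB]
      all_goals rw [card_insert_of_notMem huB]
      · omega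
      · omega
      · rw [hs_card, Nat.mul_succ]
        omega

end SimpleGraph

theorem kCliques_isContained_of_isClique {t m : ℕ} {H : SimpleGraph V} {C : Fin t → Finset V}
    (hC : ∀ i, H.IsClique (C i : Set V)) (hm : ∀ i, m ≤ #(C i))
    (hdisj : Pairwise fun i j => Disjoint (C i) (C j)) : kCliques t m ⊑ H := by
  have hemb : ∀ i, ∃ e : Fin m ↪ V, ∀ j, e j ∈ C i := fun i => by
    obtain ⟨e⟩ :=
      Function.Embedding.nonempty_of_card_le (α := Fin m) (β := C i) (by simpa using hm i)
    exact ⟨e.trans (Function.Embedding.subtype _), fun j => (e j).2⟩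
  choose e he using hemb
  refine ⟨⟨⟨fun p => e p.1 p.2, ?_⟩, ?_⟩⟩
  · rintro ⟨i, j⟩ ⟨i', j'⟩ ⟨rfl, hjj'⟩
    exact hC i (he i j) (he i j') ((e i).injective.ne hjj')
  · rintro ⟨i, j⟩ ⟨i', j'⟩ h
    by_cases hii' : i = i'
    · subst hii'
      exact Prod.ext rfl ((e i).injective h)
    · exact (Finset.disjoint_left.1 (hdisj hii') (he i j) (h ▸ he i' j')).elim

theorem not_isContained_compl_comap_top [Fintype W] [DecidableEq ι] [Fintype V]
    {G : SimpleGraph W} (hG : G.Connected) (f : V → ι)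
    (hf : ∀ i, Fintype.card {v // f v = i} < Fintype.card W) :
    ¬ G ⊑ ((⊤ : SimpleGraph ι).comap f)ᶜ := by
  rintro ⟨c⟩
  obtain ⟨w₀⟩ := hG.nonempty
  have hconst : ∀ w, f (c w) = f (c w₀) := fun w => by
    obtain ⟨p⟩ := hG.preconnected w w₀
    induction p with
    | nil => rfl
    | cons h _ ih =>
      have := c.toHom.map_adj h
      simp only [compl_adj, comap_adj, top_adj, not_not] at this
      exact this.2.trans ih
  exact (hf (f (c w₀))).not_ge <| Fintype.card_le_of_injective (fun w => ⟨c w, hconst w⟩)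
    fun w w' h => c.injective (by simpa using h)

theorem not_kCliques_two_isContained_comap_top [Fintype ι] {m : ℕ} (f : V → ι)
    (hι : Fintype.card ι = m) {i₀ : ι} (hi₀ : ∀ v w, f v = i₀ → f w = i₀ → v = w) :
    ¬ kCliques 2 m ⊑ (⊤ : SimpleGraph ι).comap f := by
  rintro ⟨c⟩
  have hmeet : ∀ t : Fin 2, ∃ j, f (c (t, j)) = i₀ := fun t => by
    have hinj : Function.Injective fun j => f (c (t, j)) := fun j j' h => by
      by_contra hne
      have := c.toHom.map_adj (show (kCliques 2 m).Adj (t, j) (t, j') from ⟨rfl, hne⟩)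
      simp only [comap_adj, top_adj] at this
      exact this h
    exact ((Fintype.bijective_iff_injective_and_card _).2 ⟨hinj, by simp [hι]⟩).2 i₀
  obtain ⟨j₀, hj₀⟩ := hmeet 0
  obtain ⟨j₁, hj₁⟩ := hmeet 1
  simpa using congrArg Prod.fst (c.injective (hi₀ _ _ hj₀ hj₁))

theorem isRamsey.isContained_or {U : Type*} {G : SimpleGraph V} {H : SimpleGraph W} {N : ℕ}
    (h : isRamsey G H N) (e : Fin N ↪ U) (R : SimpleGraph U) : G ⊑ R ∨ H ⊑ Rᶜ := by
  rcases h (R.comap e) with hG | hH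
  · exact .inl ((graphEmbeds_iff_isContained.1 hG).trans (Embedding.comap e R).isContained)
  · rw [graphEmbeds_iff_isContained, compl_comap_of_injective e.injective] at hH
    exact .inr (hH.trans (Embedding.comap e Rᶜ).isContained)

theorem isRamsey_mono {G : SimpleGraph V} {H : SimpleGraph W} {N M : ℕ} (h : isRamsey G H N)
    (hNM : N ≤ M) : isRamsey G H M := fun R => by
  simpa only [graphEmbeds_iff_isContained] using h.isContained_or (Fin.castLEEmb hNM) R

theorem pathGraph_isContained_or_kCliques_two_isContained_compl [Fintype V] {n m : ℕ}
    (hn : 3 ≤ n) (R : SimpleGraph V) (hV : (n - 1) * (m - 1) + 2 ≤ Fintype.card V) :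
    pathGraph n ⊑ R ∨ kCliques 2 m ⊑ Rᶜ := by
  classical
  refine or_iff_not_imp_left.2 fun hR => ?_
  obtain ⟨A, B, -, -, hAB, hA, hB, hBA, hAB1, hcard⟩ := R.exists_isIndepSet_pair hn hR univ
  have hmB : m ≤ #B := by
    obtain ⟨k, rfl⟩ : ∃ k, n = k + 3 := ⟨n - 3, by omega⟩
    rw [card_univ] at hcard
    simp only [show k + 3 - 1 = k + 2 by omega, show k + 3 - 2 = k + 1 by omega] at hV hcard
    have : (k + 2) * (m - 1) < (k + 2) * #B := by nlinarith
    have := Nat.lt_of_mul_lt_mul_left this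
    omega
  refine kCliques_isContained_of_isClique (C := ![A, B]) (fun i => ?_) (fun i => ?_) ?_
  · fin_cases i <;> simpa
  · fin_cases i <;> simp <;> omega
  · intro i j hij
    fin_cases i <;> fin_cases j <;> simp_all [hAB.symm]

theorem not_isRamsey_pathGraph_kCliques_two {n m : ℕ} (hn : 2 ≤ n) (hm : 1 ≤ m) :
    ¬ isRamsey (pathGraph n) (kCliques 2 m) ((n - 1) * (m - 1) + 1) := by
  -- red cliques: `m - 1` blocks `some i` of size `n - 1` and the singleton block `none`
  let f : Option (Fin (m - 1) × Fin (n - 1)) → Option (Fin (m - 1)) := Option.map Prod.fst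
  have hcardV : Fintype.card (Option (Fin (m - 1) × Fin (n - 1))) = (n - 1) * (m - 1) + 1 := by
    simp [mul_comm]
  intro h
  rcases h.isContained_or (Fintype.equivFinOfCardEq hcardV).symm.toEmbedding
    ((⊤ : SimpleGraph _).comap f)ᶜ with hred | hblue
  · obtain ⟨k, rfl⟩ : ∃ k, n = k + 1 := ⟨n - 1, by omega⟩
    refine not_isContained_compl_comap_top (pathGraph_connected k) f (fun i => ?_) hred
    rcases i with _ | i
    · refine lt_of_le_of_lt (Fintype.card_le_one_iff.2 fun ⟨v, hv⟩ ⟨w, hw⟩ => ?_)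
        (by simp; omega)
      simp only [f, Option.map_eq_none_iff] at hv hw
      subst hv hw
      rfl
    · refine lt_of_le_of_lt (Fintype.card_le_of_surjective
        (fun j : Fin k => (⟨some (i, j), rfl⟩ : {v // f v = some i})) ?_) (by simp)
      rintro ⟨_ | ⟨i', j⟩, hv⟩
      · simp [f] at hv
      · simp only [f, Option.map_some, Option.some_inj] at hv
        subst hv
        exact ⟨j, rfl⟩
  · rw [compl_compl] at hblue
    refine not_kCliques_two_isContained_comap_top f (by simp; omega) (i₀ := none)
      (fun v w hv hw => ?_) hblue
    simp_all [f]

/-- `R(P_n, 2K_m) = (n-1)(m-1) + 2` for `n ≥ 3`, `m ≥ 2`. -/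
theorem stmt_3 (n m : ℕ) (hn : 3 ≤ n) (hm : 2 ≤ m) :
    ramsey (pathGraph n) (kCliques 2 m) = (n - 1) * (m - 1) + 2 := by
  have hupper : isRamsey (pathGraph n) (kCliques 2 m) ((n - 1) * (m - 1) + 2) := fun R => by
    simpa only [graphEmbeds_iff_isContained] using
      pathGraph_isContained_or_kCliques_two_isContained_compl hn R (by simp)
  exact (Nat.sInf_upward_closed_eq_succ_iff (fun _ _ hle h => isRamsey_mono h hle) _).2
    ⟨hupper, not_isRamsey_pathGraph_kCliques_two (by omega) (by omega)⟩
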